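/- Let (X,d) be a strict quasi-circular Robinson space with compatible circular order β, and suppose β is not compatible in the strictly circular Robinson sense (i.e., some quadruple x ⋖ u ⋖ y ⋖ v violates scR). Then there exist x, y ∈ X, x' ∈ F_x, y' ∈ F_y such that x ⋖ x' ⋖ y ⋖ y' or x ⋖ y' ⋖ y ⋖ x'. -/
import Mathlib


/-- A circular order on `X`: a ternary relation satisfying Huntington's axioms
(CO1)-(CO4), holding only for triples of distinct points. -/
structure CircOrder (X : Type*) where
  btw : X → X → X → Prop
  distinct : ∀ {u v w}, btw u v w → u ≠ v ∧ v ≠ w ∧ u ≠ w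
  total : ∀ {u v w : X}, u ≠ v → v ≠ w → u ≠ w → btw u v w ∨ btw w v u
  asymm : ∀ {u v w}, btw u v w → ¬ btw w v u
  cyclic : ∀ {u v w}, btw u v w → btw v w u
  btw_trans : ∀ {u v w x}, btw u v w → btw u w x → btw u v x

/-- `x₀ ⋖ x₁ ⋖ ... ⋖ x_{n-1}`: the sequence contains at least three distinct
points and `β (x i) (x j) (x k)` holds for all `i < j < k` with distinct values. -/
def CircOrder.Chain {X : Type*} (C : CircOrder X) {n : ℕ} (x : Fin n → X) : Prop :=
  (∃ i j k : Fin n, x i ≠ x j ∧ x j ≠ x k ∧ x i ≠ x k) ∧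
  ∀ i j k : Fin n, i < j → j < k →
    x i ≠ x j → x j ≠ x k → x i ≠ x k → C.btw (x i) (x j) (x k)

/-- The arc from `a` to `b` (in the direction of the circular order). -/
def CircOrder.arc {X : Type*} (C : CircOrder X) (a b : X) : Set X :=
  {t | C.btw a t b} ∪ {a, b}

/-- `A` is an arc of the circular order: a nonempty proper subset with no four
distinct points `u, v ∈ A`, `s, t ∉ A` arranged cyclically as `u ⋖ s ⋖ v ⋖ t`. -/
def CircOrder.IsArc {X : Type*} (C : CircOrder X) (A : Set X) : Prop :=
  A.Nonempty ∧ A ≠ Set.univ ∧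
    ¬ ∃ u v s t : X, u ∈ A ∧ v ∈ A ∧ s ∉ A ∧ t ∉ A ∧ u ≠ v ∧ s ≠ t ∧
      C.Chain ![u, s, v, t]

/-- `d` is a dissimilarity on `X`. -/
def Dissim {X : Type*} (d : X → X → ℝ) : Prop :=
  (∀ x y, d x y = d y x) ∧ (∀ x y, 0 ≤ d x y) ∧ (∀ x y, d x y = 0 ↔ x = y)

/-- The set of farthest neighbors of `x`. -/
def Fset {X : Type*} (d : X → X → ℝ) (x : X) : Set X :=
  {y | ∀ z, d x z ≤ d x y}

/-- `β` is compatible in the pre-circular Robinson sense: every quadruple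
`x ⋖ y ⋖ z ⋖ t` satisfies `cR(x,y,z,t)`. -/
def preCompat {X : Type*} (C : CircOrder X) (d : X → X → ℝ) : Prop :=
  ∀ x y z t : X, C.Chain ![x, y, z, t] →
    min (max (d x y) (d y z)) (max (d x t) (d t z)) ≤ d x z

/-- `β` is compatible in the strictly pre-circular (= strictly circular)
Robinson sense: every quadruple of distinct points `x ⋖ y ⋖ z ⋖ t`
satisfies `scR(x,y,z,t)`. -/
def spreCompat {X : Type*} (C : CircOrder X) (d : X → X → ℝ) : Prop :=
  ∀ x y z t : X, List.Pairwise (· ≠ ·) [x, y, z, t] → C.Chain ![x, y, z, t] →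
    min (max (d x y) (d y z)) (max (d x t) (d t z)) < d x z

/-- `β` is compatible in the quasi-circular Robinson sense: every quadruple
`x ⋖ y ⋖ z ⋖ t` satisfies `qcR(x,y,z,t)`. -/
def qcCompat {X : Type*} (C : CircOrder X) (d : X → X → ℝ) : Prop :=
  ∀ x y z t : X, C.Chain ![x, y, z, t] → min (d y z) (d t z) ≤ d x z

/-- `β` is compatible in the strictly quasi-circular Robinson sense: every
quadruple of distinct points `x ⋖ y ⋖ z ⋖ t` satisfies `sqcR(x,y,z,t)`. -/
def sqcCompat {X : Type*} (C : CircOrder X) (d : X → X → ℝ) : Prop :=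
  ∀ x y z t : X, List.Pairwise (· ≠ ·) [x, y, z, t] → C.Chain ![x, y, z, t] →
    min (d y z) (d t z) < d x z

/-- The arc from `a` to `b`, with the linear order induced by the circular
order, is a Robinson space: any `u, v, w` arranged as `a ⋖ u ⋖ v ⋖ w ⋖ b`
satisfy the Robinson inequality. -/
def RobinsonOnArc {X : Type*} (C : CircOrder X) (d : X → X → ℝ) (a b : X) : Prop :=
  ∀ u v w : X, C.Chain ![a, u, v, w, b] → max (d u v) (d v w) ≤ d u w

/-- The left arc `L_x = {t ∈ M_x : x ⋖ t ⋖ F_x}`. -/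
def Lset {X : Type*} (C : CircOrder X) (d : X → X → ℝ) (x : X) : Set X :=
  {t | t ≠ x ∧ t ∉ Fset d x ∧ ∀ s ∈ Fset d x, C.btw x t s}

/-- The right arc `R_x = {t ∈ M_x : F_x ⋖ t ⋖ x}`. -/
def Rset {X : Type*} (C : CircOrder X) (d : X → X → ℝ) (x : X) : Set X :=
  {t | t ≠ x ∧ t ∉ Fset d x ∧ ∀ s ∈ Fset d x, C.btw s t x}


section Aux

variable {X : Type*}

/-- Build a 4-chain from the four betweenness facts. -/
lemma chain4 (C : CircOrder X) {a b c e : X}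
    (h1 : C.btw a b c) (h2 : C.btw a b e) (h3 : C.btw a c e) (h4 : C.btw b c e) :
    C.Chain ![a, b, c, e] := by
  obtain ⟨hab, hbc, hac⟩ := C.distinct h1
  refine ⟨⟨0, 1, 2, by simpa using hab, by simpa using hbc, by simpa using hac⟩, ?_⟩
  intro i j k hij hjk _ _ _
  fin_cases i <;> fin_cases j <;> fin_cases k <;> simp_all

/-- Destruct a 4-chain of pairwise distinct points. -/
lemma chain4_elim (C : CircOrder X) {a b c e : X} (h : C.Chain ![a, b, c, e])
    (hab : a ≠ b) (hbc : b ≠ c) (hce : c ≠ e) (hac : a ≠ c) (hae : a ≠ e) (hbe : b ≠ e) :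
    C.btw a b c ∧ C.btw a b e ∧ C.btw a c e ∧ C.btw b c e := by
  refine ⟨?_, ?_, ?_, ?_⟩
  · simpa using h.2 0 1 2 (by decide) (by decide)
      (by simpa using hab) (by simpa using hbc) (by simpa using hac)
  · simpa using h.2 0 1 3 (by decide) (by decide)
      (by simpa using hab) (by simpa using hbe) (by simpa using hae)
  · simpa using h.2 0 2 3 (by decide) (by decide)
      (by simpa using hac) (by simpa using hce) (by simpa using hae)
  · simpa using h.2 1 2 3 (by decide) (by decide)
      (by simpa using hbc) (by simpa using hce) (by simpa using hbe)

/-- The reversed circular order. -/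
def CircOrder.rev (C : CircOrder X) : CircOrder X where
  btw u v w := C.btw w v u
  distinct h := ⟨(C.distinct h).2.1.symm, (C.distinct h).1.symm, (C.distinct h).2.2.symm⟩
  total h1 h2 h3 := C.total h2.symm h1.symm h3.symm
  asymm h := C.asymm h
  cyclic h := C.cyclic (C.cyclic h)
  btw_trans h1 h2 := by
    -- h1 : btw w v u, h2 : btw x w u ; goal : btw x v u
    have a1 := C.cyclic (C.cyclic h2)  -- btw u x w
    have a2 := C.cyclic (C.cyclic h1)  -- btw u w v
    exact C.cyclic (C.btw_trans a1 a2)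

lemma sqc_rev (C : CircOrder X) (d : X → X → ℝ) (hc : sqcCompat C d) :
    sqcCompat C.rev d := by
  intro x y z t hpw hch
  have hd : x ≠ y ∧ x ≠ z ∧ x ≠ t ∧ y ≠ z ∧ y ≠ t ∧ z ≠ t := by
    simpa [List.pairwise_cons, and_assoc] using hpw
  obtain ⟨hxy, hxz, hxt, hyz, hyt, hzt⟩ := hd
  obtain ⟨A1, A2, A3, A4⟩ := chain4_elim C.rev hch hxy hyz hzt hxz hxt hyt
  -- A1 : btw z y x, A2 : btw t y x, A3 : btw t z x, A4 : btw t z y (in C)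
  have B1 : C.btw x t z := C.cyclic (C.cyclic A3)
  have B2 : C.btw x t y := C.cyclic (C.cyclic A2)
  have B3 : C.btw x z y := C.cyclic (C.cyclic A1)
  have hpw' : List.Pairwise (· ≠ ·) [x, t, z, y] := by
    simp only [List.pairwise_cons, List.mem_cons, List.not_mem_nil, List.mem_singleton]
    aesop
  have := hc x t z y hpw' (chain4 C B1 B2 B3 A4)
  rwa [min_comm] at this

/-- Key step: if `p ⋖ u ⋖ q` and `d p u ≥ d p q`, then some farthest neighbor of `p`
lies strictly between `p` and `q`. -/
lemma stepA [Fintype X] (d : X → X → ℝ) (hd : Dissim d)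
    (C : CircOrder X) (hc : sqcCompat C d) (p u q : X)
    (hpuq : C.btw p u q) (h1 : d p q ≤ d p u) :
    ∃ x', x' ∈ Fset d p ∧ C.btw p x' q := by
  obtain ⟨hpu, huq, hpq⟩ := C.distinct hpuq
  have dpq_pos : 0 < d p q :=
    lt_of_le_of_ne (hd.2.1 p q) (fun h => hpq ((hd.2.2 p q).mp h.symm))
  have : Nonempty X := ⟨p⟩
  obtain ⟨m, hm⟩ := Finite.exists_max (d p)
  have hmF : m ∈ Fset d p := hm
  have hdpm : d p q ≤ d p m := le_trans h1 (hm u)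
  by_cases hmq : m = q
  · refine ⟨u, fun z => le_trans (hm z) ?_, hpuq⟩
    rw [hmq]; exact h1
  · have hmp : m ≠ p := by
      intro h; rw [h] at hdpm
      have h0 : d p p = 0 := (hd.2.2 p p).mpr rfl
      linarith
    rcases C.total hmp.symm hmq hpq with hcase | hcase
    · exact ⟨m, hmF, hcase⟩
    · exfalso
      -- hcase : btw q m p
      have hqpu : C.btw q p u := C.cyclic (C.cyclic hpuq)
      have hqmu : C.btw q m u := C.btw_trans hcase hqpu
      have hpqm : C.btw p q m := C.cyclic (C.cyclic hcase)
      have hpum : C.btw p u m := C.btw_trans hpuq hpqm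
      have hmpu : C.btw m p u := C.cyclic (C.cyclic hpum)
      have hch : C.Chain ![q, m, p, u] := chain4 C hcase hqmu hqpu hmpu
      have hmu : m ≠ u := (C.distinct hqmu).2.1
      have hpw : List.Pairwise (· ≠ ·) [q, m, p, u] := by
        simp only [List.pairwise_cons, List.mem_cons, List.not_mem_nil, List.mem_singleton]
        have := hpq.symm; have := huq.symm; have := hmq; have := hmp; have := hmu
        have := hpu
        aesop
      have hlt := hc q m p u hpw hch
      have e1 : d p q ≤ d m p := by rw [hd.1 m p]; exact hdpm
      have e2 : d p q ≤ d u p := by rw [hd.1 u p]; exact h1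
      rw [hd.1 q p] at hlt
      exact absurd hlt (not_lt.mpr (le_min e1 e2))

/-- Two crossing arcs give a 4-chain. -/
lemma interleave (C : CircOrder X) {p a q b : X}
    (h1 : C.btw p a q) (h2 : C.btw q b p) : C.Chain ![p, a, q, b] := by
  have hpqb : C.btw p q b := C.cyclic (C.cyclic h2)
  have hpab : C.btw p a b := C.btw_trans h1 hpqb
  have hqpa : C.btw q p a := C.cyclic (C.cyclic h1)
  have hqba : C.btw q b a := C.btw_trans h2 hqpa
  have haqb : C.btw a q b := C.cyclic (C.cyclic hqba)
  exact chain4 C h1 hpab hpqb haqb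

end Aux

theorem stmt15 {X : Type*} [Fintype X] (d : X → X → ℝ) (hd : Dissim d)
    (C : CircOrder X) (hc : sqcCompat C d) (hns : ¬ spreCompat C d) :
    ∃ x y x' y' : X, x' ∈ Fset d x ∧ y' ∈ Fset d y ∧
      (C.Chain ![x, x', y, y'] ∨ C.Chain ![x, y', y, x']) := by
  rw [spreCompat] at hns; push_neg at hns
  obtain ⟨p, u, q, v, hpw, hch, hle⟩ := hns
  have hne : p ≠ u ∧ p ≠ q ∧ p ≠ v ∧ u ≠ q ∧ u ≠ v ∧ q ≠ v := by
    simpa [List.pairwise_cons, and_assoc] using hpw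
  obtain ⟨hpu, hpq, hpv, huq, huv, hqv⟩ := hne
  obtain ⟨B1, B2, B3, B4⟩ := chain4_elim C hch hpu huq hqv hpq hpv huv
  -- B1 : btw p u q, B2 : btw p u v, B3 : btw p q v, B4 : btw u q v
  have hqvp : C.btw q v p := C.cyclic B3
  have sqc1 := hc p u q v hpw hch
  -- sqc1 : min (d u q) (d v q) < d p q
  have hch2 : C.Chain ![q, v, p, u] :=
    chain4 C hqvp (C.cyclic B4) (C.cyclic (C.cyclic B1)) (C.cyclic (C.cyclic B2))
  have hpw2 : List.Pairwise (· ≠ ·) [q, v, p, u] := by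
    simp only [List.pairwise_cons, List.mem_cons, List.not_mem_nil, List.mem_singleton]
    have := hpq.symm; have := huq.symm; have := hqv; have := hpv.symm; have := huv.symm
    have := hpu
    aesop
  have sqc2 := hc q v p u hpw2 hch2
  -- sqc2 : min (d v p) (d u p) < d q p
  have hle1 : d p q ≤ max (d p u) (d u q) := le_trans hle (min_le_left _ _)
  have hle2 : d p q ≤ max (d p v) (d v q) := le_trans hle (min_le_right _ _)
  rcases lt_or_ge (d u q) (d p q) with hduq | hduq
  · -- case B : d p u ≥ d p q, d q v ≥ d q p
    have h1 : d p q ≤ d p u := (le_max_iff.mp hle1).resolve_right (not_le.mpr hduq)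
    have hdvp : d v p < d q p := by
      rcases min_lt_iff.mp sqc2 with h | h
      · exact h
      · exfalso; rw [hd.1 u p, hd.1 q p] at h; linarith
    have h2 : d q p ≤ d q v := by
      have : d p q ≤ d v q := by
        refine (le_max_iff.mp hle2).resolve_left (not_le.mpr ?_)
        rw [hd.1 p v, ← hd.1 q p]; exact hdvp
      rw [hd.1 q p, hd.1 q v]; exact this
    obtain ⟨x', hx'F, hx'b⟩ := stepA d hd C hc p u q B1 h1
    obtain ⟨y', hy'F, hy'b⟩ := stepA d hd C hc q v p hqvp h2
    exact ⟨p, q, x', y', hx'F, hy'F, Or.inl (interleave C hx'b hy'b)⟩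
  · -- case C : d p v ≥ d p q, d q u ≥ d q p
    have hdvq : d v q < d p q := by
      rcases min_lt_iff.mp sqc1 with h | h
      · exact absurd h (not_lt.mpr hduq)
      · exact h
    have h1 : d p q ≤ d p v := (le_max_iff.mp hle2).resolve_right (not_le.mpr hdvq)
    have h2 : d q p ≤ d q u := by rw [hd.1 q p, hd.1 q u]; exact hduq
    obtain ⟨x', hx'F, hx'b⟩ :=
      stepA d hd C.rev (sqc_rev C d hc) p v q (show C.btw q v p from hqvp) h1
    obtain ⟨y', hy'F, hy'b⟩ :=
      stepA d hd C.rev (sqc_rev C d hc) q u p (show C.btw p u q from B1) h2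
    -- hx'b : C.btw q x' p, hy'b : C.btw p y' q
    exact ⟨p, q, x', y', hx'F, hy'F, Or.inr (interleave C hy'b hx'b)⟩
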